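/- Let ω = 2g_{ij} δy^j ∧ dx^i be the almost symplectic 2-form of the evolution nonlinear connection with δy^j = dy^j + N^j_k dx^k, N^i_j = N₀^i_j − (1/4)∂V^i/∂y^j, and let ω_L = 2g_{ij} δ₀y^j ∧ dx^i with δ₀y^j = dy^j + N₀^j_k dx^k be the Cartan symplectic form. Then ω_L = ω + (1/2)F_{ij} dx^j ∧ dx^i, where F_{ij} = (1/2)(∂σ_i/∂y^j − ∂σ_j/∂y^i) is the helicoidal tensor and σ_i = g_{ik}V^k. Consequently, the evolution nonlinear connection is compatible with the symplectic structure (ω_L(hX,hY) = 0 for all X,Y) if and only if ∂σ_i/∂y^j is symmetric in i,j. -/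

import Mathlib

/-!
Along `dx`, the adapted coframes of `N₀` and of `N = N₀ - (1/4)∂V/∂y` differ by
`δ₀y - δy = (1/4)(∂V/∂y) dx`, so `ω_L - ω` is the purely horizontal form
`(1/2)(g ∂V/∂y)_{ij} dx^j ∧ dx^i`, which only sees the skew part of `g ∂V/∂y`.
By the Leibniz rule `∂σ_i/∂y^j = (∂g_{ik}/∂y^j) V^k + g_{ik} ∂V^k/∂y^j`, and the first
term is symmetric in `i, j` because `g` is symmetric and `∂g_{ij}/∂y^k` is symmetric in
`j, k` (the Cartan condition), so `∂g_{ij}/∂y^k` is totally symmetric. Hence the skew parts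
of `g ∂V/∂y` and of `∂σ/∂y` agree, which gives the identity. Horizontal vectors of `N` are
annihilated by every `δy^j`, so `ω` vanishes on them and `ω_L(hX, hY)` is the `F`-term
alone; a form `C_{ij} dx^j ∧ dx^i` vanishes identically iff `C` is symmetric.
-/

/-- The phase space `TM` in local coordinates: points `(x, y)`. -/
abbrev TP (n : ℕ) := (Fin n → ℝ) × (Fin n → ℝ)

/-- Partial derivative with respect to the fibre coordinate `y^i`. -/
noncomputable def pdy {n : ℕ} (i : Fin n) (f : TP n → ℝ) : TP n → ℝ :=
  fun p => fderiv ℝ f p (0, Pi.single i 1)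

/-- The 2-form `2 g_{ij} δy^j ∧ dx^i` adapted to a nonlinear connection `N`. -/
noncomputable def adaptedForm {n : ℕ} (g : TP n → Fin n → Fin n → ℝ)
    (N : TP n → Fin n → Fin n → ℝ) (p w₁ w₂ : TP n) : ℝ :=
  ∑ i, ∑ j, 2 * g p i j *
    ((w₁.2 j + ∑ k, N p j k * w₁.1 k) * w₂.1 i -
     (w₂.2 j + ∑ k, N p j k * w₂.1 k) * w₁.1 i)

/-- Horizontal lift of the vector `u` with respect to the connection `N` at `p`. -/
noncomputable def hLift {n : ℕ} (N : TP n → Fin n → Fin n → ℝ)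
    (p : TP n) (u : Fin n → ℝ) : TP n :=
  (u, fun j => -∑ i, N p j i * u i)

open Finset Matrix

section Wedge

variable {n : ℕ}

/-- `wedgeForm C u v` is `C_{ij} dx^j ∧ dx^i` evaluated on vectors with horizontal parts
`u` and `v`. -/
def wedgeForm (C : Matrix (Fin n) (Fin n) ℝ) (u v : Fin n → ℝ) : ℝ :=
  ∑ i, ∑ j, C i j * (u j * v i - v j * u i)

lemma wedgeForm_smul (c : ℝ) (C : Matrix (Fin n) (Fin n) ℝ) (u v : Fin n → ℝ) :
    wedgeForm (c • C) u v = c * wedgeForm C u v := by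
  simp only [wedgeForm, mul_sum, Matrix.smul_apply, smul_eq_mul, mul_assoc]

lemma wedgeForm_eq_dotProduct (C : Matrix (Fin n) (Fin n) ℝ) (u v : Fin n → ℝ) :
    wedgeForm C u v = v ⬝ᵥ C *ᵥ u - u ⬝ᵥ C *ᵥ v := by
  simp only [wedgeForm, dotProduct, mulVec, mul_sum, ← sum_sub_distrib]
  refine sum_congr rfl fun i _ => sum_congr rfl fun j _ => ?_
  ring

lemma wedgeForm_transpose (C : Matrix (Fin n) (Fin n) ℝ) (u v : Fin n → ℝ) :
    wedgeForm Cᵀ u v = -wedgeForm C u v := by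
  simp only [wedgeForm_eq_dotProduct, dotProduct_mulVec, vecMul_transpose, dotProduct_comm]
  ring

lemma wedgeForm_sub (C D : Matrix (Fin n) (Fin n) ℝ) (u v : Fin n → ℝ) :
    wedgeForm (C - D) u v = wedgeForm C u v - wedgeForm D u v := by
  simp only [wedgeForm, ← sum_sub_distrib, Matrix.sub_apply, sub_mul]

lemma wedgeForm_sub_transpose (C : Matrix (Fin n) (Fin n) ℝ) (u v : Fin n → ℝ) :
    wedgeForm (C - Cᵀ) u v = 2 * wedgeForm C u v := by
  rw [wedgeForm_sub, wedgeForm_transpose]; ring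

lemma wedgeForm_congr_of_sub_transpose_eq {C D : Matrix (Fin n) (Fin n) ℝ}
    (h : C - Cᵀ = D - Dᵀ) (u v : Fin n → ℝ) : wedgeForm C u v = wedgeForm D u v := by
  have hCD := congrArg (wedgeForm · u v) h
  simp only [wedgeForm_sub_transpose] at hCD
  linarith

lemma wedgeForm_single (C : Matrix (Fin n) (Fin n) ℝ) (i j : Fin n) :
    wedgeForm C (Pi.single j 1) (Pi.single i 1) = C i j - C j i := by
  simp [wedgeForm, Pi.single_apply, mul_sub, sum_sub_distrib, mul_ite, eq_comm]

lemma forall_wedgeForm_eq_zero_iff (C : Matrix (Fin n) (Fin n) ℝ) :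
    (∀ u v, wedgeForm C u v = 0) ↔ ∀ i j, C i j = C j i := by
  refine ⟨fun h i j => ?_, fun h u v => ?_⟩
  · simpa [wedgeForm_single, sub_eq_zero] using h (Pi.single j 1) (Pi.single i 1)
  · have hanti := wedgeForm_transpose C u v
    rw [show Cᵀ = C from ext fun i j => h j i] at hanti
    linarith

end Wedge

section Connection

variable {n : ℕ}

lemma adaptedForm_eq_dotProduct (g N : TP n → Matrix (Fin n) (Fin n) ℝ) (p w₁ w₂ : TP n) :
    adaptedForm g N p w₁ w₂
      = 2 * (w₂.1 ⬝ᵥ g p *ᵥ (w₁.2 + N p *ᵥ w₁.1)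
        - w₁.1 ⬝ᵥ g p *ᵥ (w₂.2 + N p *ᵥ w₂.1)) := by
  simp only [adaptedForm, dotProduct, mulVec, mul_sum, ← sum_sub_distrib]
  refine sum_congr rfl fun i _ => sum_congr rfl fun j _ => ?_
  simp only [Pi.add_apply, mulVec, dotProduct]
  ring

lemma adaptedForm_sub_adaptedForm (g N N' : TP n → Matrix (Fin n) (Fin n) ℝ)
    (p w₁ w₂ : TP n) :
    adaptedForm g N p w₁ w₂ - adaptedForm g N' p w₁ w₂
      = 2 * wedgeForm (g p * (N p - N' p)) w₁.1 w₂.1 := by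
  simp only [adaptedForm_eq_dotProduct, wedgeForm_eq_dotProduct, Matrix.mul_sub, sub_mulVec,
    ← mulVec_mulVec, mulVec_add, dotProduct_add, dotProduct_sub]
  ring

lemma adaptedForm_hLift_hLift (g N : TP n → Fin n → Fin n → ℝ) (p : TP n)
    (u v : Fin n → ℝ) :
    adaptedForm g N p (hLift N p u) (hLift N p v) = 0 := by
  simp [adaptedForm, hLift]

end Connection

section FibreDerivative

variable {n : ℕ} {p : TP n}

lemma pdy_sum {ι : Type*} (s : Finset ι) (i : Fin n) {f : ι → TP n → ℝ}
    (hf : ∀ k ∈ s, DifferentiableAt ℝ (f k) p) :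
    pdy i (fun q => ∑ k ∈ s, f k q) p = ∑ k ∈ s, pdy i (f k) p := by
  simp only [pdy, fderiv_fun_sum hf, _root_.sum_apply]

lemma pdy_mul (i : Fin n) {f h : TP n → ℝ} (hf : DifferentiableAt ℝ f p)
    (hh : DifferentiableAt ℝ h p) :
    pdy i (fun q => f q * h q) p = pdy i f p * h p + f p * pdy i h p := by
  simp only [pdy, fderiv_fun_mul hf hh, _root_.add_apply, _root_.smul_apply, smul_eq_mul]
  ring

noncomputable def fibreJacobian (V : TP n → Fin n → ℝ) (p : TP n) :
    Matrix (Fin n) (Fin n) ℝ :=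
  fun i j => pdy j (fun q => V q i) p

def lowerIndex (g : TP n → Matrix (Fin n) (Fin n) ℝ) (V : TP n → Fin n → ℝ) :
    TP n → Fin n → ℝ :=
  fun q i => ∑ k, g q i k * V q k

lemma fibreJacobian_lowerIndex_apply {g : TP n → Matrix (Fin n) (Fin n) ℝ}
    {V : TP n → Fin n → ℝ} (hg : ∀ i j, DifferentiableAt ℝ (fun q => g q i j) p)
    (hV : ∀ i, DifferentiableAt ℝ (fun q => V q i) p) (i j : Fin n) :
    fibreJacobian (lowerIndex g V) p i j
      = ∑ k, pdy j (fun q => g q i k) p * V p k + (g p * fibreJacobian V p) i j := by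
  simp only [fibreJacobian, lowerIndex]
  rw [pdy_sum _ _ fun k _ => (hg i k).fun_mul (hV k), mul_apply, ← sum_add_distrib]
  exact sum_congr rfl fun k _ => pdy_mul j (hg i k) (hV k)

lemma pdy_comm_of_symm_of_cartan {g : TP n → Matrix (Fin n) (Fin n) ℝ}
    (hgsym : ∀ p i j, g p i j = g p j i)
    (hCartan : ∀ (p : TP n) (i j k : Fin n),
      pdy k (fun q => g q i j) p = pdy j (fun q => g q i k) p) (i j k : Fin n) :
    pdy j (fun q => g q i k) p = pdy i (fun q => g q j k) p := by
  calc pdy j (fun q => g q i k) p = pdy k (fun q => g q i j) p := (hCartan p i j k).symm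
    _ = pdy k (fun q => g q j i) p := by simp only [hgsym _ i j]
    _ = pdy i (fun q => g q j k) p := hCartan p j i k

lemma fibreJacobian_lowerIndex_sub_transpose {g : TP n → Matrix (Fin n) (Fin n) ℝ}
    {V : TP n → Fin n → ℝ} (hg : ∀ i j, DifferentiableAt ℝ (fun q => g q i j) p)
    (hV : ∀ i, DifferentiableAt ℝ (fun q => V q i) p)
    (hgsym : ∀ p i j, g p i j = g p j i)
    (hCartan : ∀ (p : TP n) (i j k : Fin n),
      pdy k (fun q => g q i j) p = pdy j (fun q => g q i k) p) :
    fibreJacobian (lowerIndex g V) p - (fibreJacobian (lowerIndex g V) p)ᵀ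
      = g p * fibreJacobian V p - (g p * fibreJacobian V p)ᵀ := by
  ext i j
  simp only [Matrix.sub_apply, transpose_apply, fibreJacobian_lowerIndex_apply hg hV,
    pdy_comm_of_symm_of_cartan hgsym hCartan i j]
  ring

end FibreDerivative

section Evolution

variable {n : ℕ}

noncomputable def evolutionConnection (N₀ : TP n → Matrix (Fin n) (Fin n) ℝ)
    (V : TP n → Fin n → ℝ) : TP n → Matrix (Fin n) (Fin n) ℝ :=
  fun p i j => N₀ p i j - (1/4) * pdy j (fun q => V q i) p

lemma adaptedForm_sub_adaptedForm_evolutionConnection {g : TP n → Matrix (Fin n) (Fin n) ℝ}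
    {V : TP n → Fin n → ℝ} {p : TP n} (N₀ : TP n → Matrix (Fin n) (Fin n) ℝ)
    (hg : ∀ i j, DifferentiableAt ℝ (fun q => g q i j) p)
    (hV : ∀ i, DifferentiableAt ℝ (fun q => V q i) p)
    (hgsym : ∀ p i j, g p i j = g p j i)
    (hCartan : ∀ (p : TP n) (i j k : Fin n),
      pdy k (fun q => g q i j) p = pdy j (fun q => g q i k) p) (w₁ w₂ : TP n) :
    adaptedForm g N₀ p w₁ w₂ - adaptedForm g (evolutionConnection N₀ V) p w₁ w₂
      = (1/2) * wedgeForm (fibreJacobian (lowerIndex g V) p) w₁.1 w₂.1 := by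
  have hN : N₀ p - evolutionConnection N₀ V p = (1/4 : ℝ) • fibreJacobian V p := by
    ext i j
    simp only [evolutionConnection, fibreJacobian, Matrix.sub_apply, Matrix.smul_apply,
      smul_eq_mul]
    ring
  rw [adaptedForm_sub_adaptedForm, hN, Matrix.mul_smul, wedgeForm_smul,
    wedgeForm_congr_of_sub_transpose_eq
      (fibreJacobian_lowerIndex_sub_transpose hg hV hgsym hCartan).symm]
  ring

end Evolution

/-- with evolution connection `N = N₀ − (1/4)∂V/∂y` and helicoidal
tensor `F_{ij} = (1/2)(∂σ_i/∂y^j − ∂σ_j/∂y^i)`, one has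
`ω_L = ω + (1/2)F_{ij} dx^j ∧ dx^i`; consequently the evolution connection is
compatible with the symplectic structure iff `∂σ_i/∂y^j` is symmetric in `i,j`. -/
theorem stmt7 {n : ℕ} (g : TP n → Fin n → Fin n → ℝ)
    (N₀ : TP n → Fin n → Fin n → ℝ) (V : TP n → Fin n → ℝ)
    (hg : ∀ i j, ContDiff ℝ (⊤ : ℕ∞) (fun p => g p i j))
    (hV : ∀ i, ContDiff ℝ (⊤ : ℕ∞) (fun p => V p i))
    (hgsym : ∀ p i j, g p i j = g p j i)
    (hCartan : ∀ (p : TP n) (i j k : Fin n),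
      pdy k (fun q => g q i j) p = pdy j (fun q => g q i k) p) :
    (∀ (p w₁ w₂ : TP n),
      adaptedForm g N₀ p w₁ w₂ =
        adaptedForm g (fun p i j => N₀ p i j - (1/4) * pdy j (fun q => V q i) p) p w₁ w₂
        + (1/2) * ∑ i, ∑ j,
            ((1/2) * (pdy j (fun q => ∑ k, g q i k * V q k) p
                    - pdy i (fun q => ∑ k, g q j k * V q k) p)) *
            (w₁.1 j * w₂.1 i - w₂.1 j * w₁.1 i)) ∧
    ((∀ (p : TP n) (u v : Fin n → ℝ),
        adaptedForm g N₀ p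
          (hLift (fun p i j => N₀ p i j - (1/4) * pdy j (fun q => V q i) p) p u)
          (hLift (fun p i j => N₀ p i j - (1/4) * pdy j (fun q => V q i) p) p v) = 0) ↔
      (∀ (p : TP n) (i j : Fin n),
        pdy j (fun q => ∑ k, g q i k * V q k) p
          = pdy i (fun q => ∑ k, g q j k * V q k) p)) := by
  have hgd (p : TP n) (i j : Fin n) : DifferentiableAt ℝ (fun q => g q i j) p :=
    ((hg i j).differentiable (by simp)).differentiableAt
  have hVd (p : TP n) (i : Fin n) : DifferentiableAt ℝ (fun q => V q i) p :=
    ((hV i).differentiable (by simp)).differentiableAt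
  have key (p w₁ w₂ : TP n) :=
    adaptedForm_sub_adaptedForm_evolutionConnection N₀ (hgd p) (hVd p) hgsym hCartan w₁ w₂
  change (∀ p w₁ w₂, adaptedForm g N₀ p w₁ w₂
      = adaptedForm g (evolutionConnection N₀ V) p w₁ w₂
        + (1/2) * wedgeForm ((1/2 : ℝ) • (fibreJacobian (lowerIndex g V) p
          - (fibreJacobian (lowerIndex g V) p)ᵀ)) w₁.1 w₂.1) ∧
    ((∀ p u v, adaptedForm g N₀ p (hLift (evolutionConnection N₀ V) p u)
      (hLift (evolutionConnection N₀ V) p v) = 0) ↔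
      ∀ p i j, fibreJacobian (lowerIndex g V) p i j = fibreJacobian (lowerIndex g V) p j i)
  simp only [wedgeForm_smul, wedgeForm_sub_transpose]
  refine ⟨fun p w₁ w₂ => by linarith [key p w₁ w₂], ?_⟩
  have hHorizontal (p : TP n) (u v : Fin n → ℝ) :
      adaptedForm g N₀ p (hLift (evolutionConnection N₀ V) p u)
        (hLift (evolutionConnection N₀ V) p v)
        = (1/2) * wedgeForm (fibreJacobian (lowerIndex g V) p) u v := by
    have hkey :=
      key p (hLift (evolutionConnection N₀ V) p u) (hLift (evolutionConnection N₀ V) p v)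
    rwa [adaptedForm_hLift_hLift g (evolutionConnection N₀ V) p u v, sub_zero] at hkey
  simp only [hHorizontal, mul_eq_zero, one_div, inv_eq_zero, OfNat.ofNat_ne_zero, false_or]
  exact forall_congr' fun p => forall_wedgeForm_eq_zero_iff _
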